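/- Let η > 1 and M > 0. For every measurable nonnegative function ρ on ℝ² with ∫_{ℝ²} ρ dx = M, such that ρ log ρ and x ↦ log(1+|x|²)ρ(x) are integrable, one has ∫_{ℝ²} ρ log(ρ/M) dx + η ∫_{ℝ²} log(1+|x|²) ρ(x) dx ≥ M log((η−1)/π). Moreover equality is achieved by ρ = M ρ_η, where ρ_η(x) := (η−1) / (π (1+|x|²)^η). -/

import Mathlib

/-!
Write `ρ_η = cauchyProfile η`. Since `log ρ_η = log ((η - 1) / π) - η log (1 + |x|²)`, the
relative entropy `∫ ρ log (ρ / (M ρ_η))` equals `J_η[ρ] - M log ((η - 1) / π)`, and it is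
nonnegative by Gibbs' inequality `a - b ≤ a log (a / b)` integrated against two densities of
equal mass. The value at `ρ = M ρ_η` comes from `∫ ρ_η = 1` and
`∫ log (1 + |x|²) ρ_η = 1 / (η - 1)`, both computed in polar coordinates by an explicit
antiderivative.
-/

open MeasureTheory Real

noncomputable section

abbrev R2 : Type := EuclideanSpace ℝ (Fin 2)

open Set Filter Module Topology

lemma sub_le_mul_log_div {a b : ℝ} (ha : 0 ≤ a) (hb : 0 < b) : a - b ≤ a * log (a / b) := by
  rcases ha.eq_or_lt with rfl | ha
  · simpa using hb.le
  · have h := mul_le_mul_of_nonneg_left (one_sub_inv_le_log_of_pos (div_pos ha hb)) ha.le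
    rwa [inv_div, mul_sub, mul_one, mul_div_cancel₀ _ ha.ne'] at h

lemma mul_log_div {b : ℝ} (a : ℝ) (hb : b ≠ 0) : a * log (a / b) = a * log a - a * log b := by
  rcases eq_or_ne a 0 with rfl | ha
  · simp
  · rw [log_div ha hb, mul_sub]

lemma mul_log_div_mul {b c : ℝ} (a : ℝ) (hb : b ≠ 0) (hc : c ≠ 0) :
    a * log (a / (b * c)) = a * log (a / b) - a * log c := by
  rw [mul_log_div a (mul_ne_zero hb hc), mul_log_div a hb, log_mul hb hc]
  ring

theorem integral_sub_integral_le_integral_mul_log_div {α : Type*} [MeasurableSpace α]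
    {μ : Measure α} {ρ σ : α → ℝ} (hρ : 0 ≤ᵐ[μ] ρ) (hσ : ∀ᵐ x ∂μ, 0 < σ x)
    (hρi : Integrable ρ μ) (hσi : Integrable σ μ)
    (hint : Integrable (fun x => ρ x * log (ρ x / σ x)) μ) :
    ∫ x, ρ x ∂μ - ∫ x, σ x ∂μ ≤ ∫ x, ρ x * log (ρ x / σ x) ∂μ := by
  rw [← integral_sub hρi hσi]
  refine integral_mono_ae (hρi.sub hσi) hint ?_
  filter_upwards [hρ, hσ] with x hρx hσx using sub_le_mul_log_div hρx hσx

section OneAddSq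

variable {η : ℝ}

lemma tendsto_one_add_sq_atTop : Tendsto (fun r : ℝ => 1 + r ^ 2) atTop atTop :=
  tendsto_atTop_add_const_left _ 1 (tendsto_pow_atTop two_ne_zero)

lemma hasDerivAt_one_add_sq_rpow (c r : ℝ) :
    HasDerivAt (fun r : ℝ => (1 + r ^ 2) ^ c) (2 * r * c * (1 + r ^ 2) ^ (c - 1)) r := by
  have h : HasDerivAt (fun r : ℝ => 1 + r ^ 2) (2 * r) r := by
    simpa using (hasDerivAt_pow 2 r).const_add 1
  exact h.rpow_const (Or.inl (by positivity))

lemma tendsto_rpow_one_sub_atTop (hη : 1 < η) :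
    Tendsto (fun u : ℝ => u ^ (1 - η)) atTop (𝓝 0) := by
  simpa [neg_sub] using tendsto_rpow_neg_atTop (y := η - 1) (by linarith)

lemma integral_Ioi_mul_one_add_sq_rpow_neg (hη : 1 < η) :
    ∫ r in Ioi (0:ℝ), r * (1 + r ^ 2) ^ (-η) = 1 / (2 * (η - 1)) := by
  have ha : η - 1 ≠ 0 := by linarith
  have hderiv (r : ℝ) : HasDerivAt (fun r : ℝ => -(1 + r ^ 2) ^ (1 - η) / (2 * (η - 1)))
      (r * (1 + r ^ 2) ^ (-η)) r := by
    refine ((hasDerivAt_one_add_sq_rpow (1 - η) r).neg.div_const _).congr_deriv ?_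
    rw [show (1 : ℝ) - η - 1 = -η by ring]
    field_simp
    ring
  have hlim : Tendsto (fun r : ℝ => -(1 + r ^ 2) ^ (1 - η) / (2 * (η - 1))) atTop (𝓝 0) := by
    simpa using ((tendsto_rpow_one_sub_atTop hη).comp tendsto_one_add_sq_atTop).neg.div_const _
  rw [integral_Ioi_of_hasDerivAt_of_nonneg' (fun r _ => hderiv r)
    (fun r (hr : 0 < r) => by positivity) hlim]
  field_simp
  simp

lemma tendsto_rpow_one_sub_mul_log_atTop (hη : 1 < η) :
    Tendsto (fun u : ℝ => u ^ (1 - η) * log u) atTop (𝓝 0) := by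
  refine (isLittleO_log_rpow_atTop (by linarith : 0 < η - 1)).tendsto_div_nhds_zero.congr' ?_
  filter_upwards [eventually_gt_atTop 0] with u hu
  rw [show 1 - η = -(η - 1) by ring, rpow_neg hu.le, div_eq_inv_mul]

lemma integral_Ioi_mul_log_one_add_sq_mul_rpow_neg (hη : 1 < η) :
    ∫ r in Ioi (0:ℝ), r * (log (1 + r ^ 2) * (1 + r ^ 2) ^ (-η)) = 1 / (2 * (η - 1) ^ 2) := by
  have ha : η - 1 ≠ 0 := by linarith
  set G : ℝ → ℝ := fun u => u ^ (1 - η) * (log u / (2 * (η - 1)) + 1 / (2 * (η - 1) ^ 2))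
  have hderiv (r : ℝ) : HasDerivAt (fun r : ℝ => -G (1 + r ^ 2))
      (r * (log (1 + r ^ 2) * (1 + r ^ 2) ^ (-η))) r := by
    have hu : (0 : ℝ) < 1 + r ^ 2 := by positivity
    have hlog : HasDerivAt (fun r : ℝ => log (1 + r ^ 2)) (2 * r / (1 + r ^ 2)) r := by
      simpa using ((hasDerivAt_pow 2 r).const_add 1).log hu.ne'
    refine ((hasDerivAt_one_add_sq_rpow (1 - η) r).mul
      ((hlog.div_const _).add_const _)).neg.congr_deriv ?_
    rw [show (1 : ℝ) - η - 1 = -η by ring,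
      show (1 + r ^ 2) ^ (1 - η) = (1 + r ^ 2) ^ (-η) * (1 + r ^ 2) by
        rw [← rpow_add_one hu.ne']; ring_nf]
    field_simp
    ring
  have hG : Tendsto G atTop (𝓝 0) := by
    simpa [G, mul_add, mul_div_assoc] using
      ((tendsto_rpow_one_sub_mul_log_atTop hη).div_const _).add
        ((tendsto_rpow_one_sub_atTop hη).mul_const _)
  have hnonneg (r : ℝ) (hr : 0 < r) : 0 ≤ r * (log (1 + r ^ 2) * (1 + r ^ 2) ^ (-η)) := by
    have : 0 ≤ log (1 + r ^ 2) := log_nonneg (by nlinarith)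
    positivity
  rw [integral_Ioi_of_hasDerivAt_of_nonneg' (fun r _ => hderiv r) hnonneg
    (by simpa using (hG.comp tendsto_one_add_sq_atTop).neg)]
  simp [G]

end OneAddSq

lemma integral_fun_norm_euclideanSpace_two (f : ℝ → ℝ) :
    ∫ x : EuclideanSpace ℝ (Fin 2), f ‖x‖ = 2 * π * ∫ y in Ioi (0:ℝ), y * f y := by
  have hball : volume.real (Metric.ball (0 : EuclideanSpace ℝ (Fin 2)) 1) = π := by
    rw [measureReal_def, EuclideanSpace.volume_ball]
    norm_num [Gamma_two, sq_sqrt pi_nonneg, ENNReal.toReal_ofReal pi_nonneg]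
  rw [integral_fun_norm_addHaar, finrank_euclideanSpace_fin, hball, nsmul_eq_mul, smul_eq_mul,
    mul_assoc]
  norm_num

section Integrability

variable {E : Type*} [NormedAddCommGroup E] [NormedSpace ℝ E] [FiniteDimensional ℝ E]
  [MeasurableSpace E] [BorelSpace E] {μ : Measure E} [μ.IsAddHaarMeasure] {η : ℝ}

lemma integrable_one_add_norm_sq_rpow_neg (hη : (finrank ℝ E : ℝ) < 2 * η) :
    Integrable (fun x : E => (1 + ‖x‖ ^ 2) ^ (-η)) μ := by
  simpa [neg_div] using integrable_rpow_neg_one_add_norm_sq (μ := μ) hη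

lemma integrable_log_one_add_norm_sq_mul_rpow_neg (hη : (finrank ℝ E : ℝ) < 2 * η) :
    Integrable (fun x : E => log (1 + ‖x‖ ^ 2) * (1 + ‖x‖ ^ 2) ^ (-η)) μ := by
  set ε : ℝ := (η - finrank ℝ E / 2) / 2
  have hε : 0 < ε := by simp only [ε]; linarith
  -- `log u ≤ u ^ ε / ε` trades the logarithm for a slightly smaller decay exponent `η - ε`
  have hdecay : Integrable (fun x : E => (1 + ‖x‖ ^ 2) ^ (-(η - ε))) μ :=
    integrable_one_add_norm_sq_rpow_neg (by simp only [ε]; linarith)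
  refine (hdecay.const_mul (1 / ε)).mono' (by fun_prop) (ae_of_all _ fun x => ?_)
  have hu : (0 : ℝ) < 1 + ‖x‖ ^ 2 := by positivity
  rw [norm_of_nonneg (mul_nonneg (log_nonneg (by nlinarith [sq_nonneg ‖x‖])) (by positivity))]
  calc log (1 + ‖x‖ ^ 2) * (1 + ‖x‖ ^ 2) ^ (-η)
      ≤ (1 + ‖x‖ ^ 2) ^ ε / ε * (1 + ‖x‖ ^ 2) ^ (-η) := by
        gcongr
        exact log_le_rpow_div hu.le hε
    _ = 1 / ε * (1 + ‖x‖ ^ 2) ^ (-(η - ε)) := by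
        rw [neg_sub, sub_eq_add_neg, rpow_add hu]
        ring

end Integrability

def cauchyProfile (η : ℝ) (x : R2) : ℝ := (η - 1) / π * (1 + ‖x‖ ^ 2) ^ (-η)

def freeEnergy (η M : ℝ) (ρ : R2 → ℝ) : ℝ :=
  (∫ x, ρ x * log (ρ x / M)) + η * ∫ x, log (1 + ‖x‖ ^ 2) * ρ x

section CauchyProfile

variable {η : ℝ}

lemma cauchyProfile_eq (η : ℝ) (x : R2) :
    cauchyProfile η x = (η - 1) / (π * (1 + ‖x‖ ^ 2) ^ η) := by
  rw [cauchyProfile, rpow_neg (by positivity)]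
  field_simp

lemma log_cauchyProfile (hη : 1 < η) (x : R2) :
    log (cauchyProfile η x) = log ((η - 1) / π) - η * log (1 + ‖x‖ ^ 2) := by
  have hu : (0 : ℝ) < 1 + ‖x‖ ^ 2 := by positivity
  rw [cauchyProfile, log_mul (div_pos (by linarith) pi_pos).ne' (rpow_pos_of_pos hu _).ne',
    log_rpow hu]
  ring

lemma cauchyProfile_pos (hη : 1 < η) (x : R2) : 0 < cauchyProfile η x := by
  have : 0 < η - 1 := by linarith
  unfold cauchyProfile
  positivity

lemma integrable_cauchyProfile (hη : 1 < η) : Integrable (cauchyProfile η) :=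
  (integrable_one_add_norm_sq_rpow_neg (by simp; linarith)).const_mul _

lemma integrable_log_mul_cauchyProfile (hη : 1 < η) :
    Integrable (fun x : R2 => log (1 + ‖x‖ ^ 2) * cauchyProfile η x) := by
  simpa only [cauchyProfile, mul_left_comm] using
    (integrable_log_one_add_norm_sq_mul_rpow_neg (by simp; linarith)).const_mul ((η - 1) / π)

lemma integral_cauchyProfile (hη : 1 < η) : ∫ x, cauchyProfile η x = 1 := by
  have : η - 1 ≠ 0 := by linarith
  simp_rw [cauchyProfile]
  rw [integral_const_mul,
    integral_fun_norm_euclideanSpace_two (fun t => (1 + t ^ 2) ^ (-η)),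
    integral_Ioi_mul_one_add_sq_rpow_neg hη]
  field_simp

lemma integral_log_mul_cauchyProfile (hη : 1 < η) :
    ∫ x, log (1 + ‖x‖ ^ 2) * cauchyProfile η x = 1 / (η - 1) := by
  have : η - 1 ≠ 0 := by linarith
  simp_rw [cauchyProfile, mul_left_comm (log _)]
  rw [integral_const_mul,
    integral_fun_norm_euclideanSpace_two (fun t => log (1 + t ^ 2) * (1 + t ^ 2) ^ (-η)),
    integral_Ioi_mul_log_one_add_sq_mul_rpow_neg hη]
  field_simp

end CauchyProfile

theorem mul_log_le_freeEnergy {η M : ℝ} (hη : 1 < η) (hM : 0 < M) {ρ : R2 → ℝ}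
    (hρ : ∀ x, 0 ≤ ρ x) (hρi : Integrable ρ) (hmass : ∫ x, ρ x = M)
    (hent : Integrable (fun x => ρ x * log (ρ x)))
    (hlog : Integrable (fun x => log (1 + ‖x‖ ^ 2) * ρ x)) :
    M * log ((η - 1) / π) ≤ freeEnergy η M ρ := by
  rw [freeEnergy]
  have hentM : Integrable (fun x => ρ x * log (ρ x / M)) := by
    simp_rw [mul_log_div _ hM.ne']
    exact hent.sub (hρi.mul_const _)
  have hrel (x : R2) : ρ x * log (ρ x / (M * cauchyProfile η x)) =
      ρ x * log (ρ x / M) - log ((η - 1) / π) * ρ x + η * (log (1 + ‖x‖ ^ 2) * ρ x) := by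
    rw [mul_log_div_mul _ hM.ne' (cauchyProfile_pos hη x).ne', log_cauchyProfile hη]
    ring
  have hsub : Integrable (fun x => ρ x * log (ρ x / M) - log ((η - 1) / π) * ρ x) :=
    hentM.sub (hρi.const_mul _)
  have hgibbs := integral_sub_integral_le_integral_mul_log_div (ae_of_all _ hρ)
    (ae_of_all _ fun x => mul_pos hM (cauchyProfile_pos hη x)) hρi
    ((integrable_cauchyProfile hη).const_mul M)
    (by simp_rw [hrel]; exact hsub.add (hlog.const_mul η))
  simp_rw [hrel] at hgibbs
  rw [integral_add hsub (hlog.const_mul η),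
    integral_sub hentM (hρi.const_mul _), integral_const_mul, integral_const_mul,
    integral_const_mul, integral_cauchyProfile hη, hmass] at hgibbs
  linarith

theorem freeEnergy_const_mul_cauchyProfile {η : ℝ} (hη : 1 < η) (M : ℝ) :
    freeEnergy η M (fun x => M * cauchyProfile η x) = M * log ((η - 1) / π) := by
  rcases eq_or_ne M 0 with rfl | hM
  · simp [freeEnergy]
  have hpt (x : R2) : M * cauchyProfile η x * log (M * cauchyProfile η x / M) =
      M * log ((η - 1) / π) * cauchyProfile η x -
        M * η * (log (1 + ‖x‖ ^ 2) * cauchyProfile η x) := by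
    rw [mul_div_cancel_left₀ _ hM, log_cauchyProfile hη]
    ring
  simp_rw [freeEnergy, hpt, mul_left_comm (log _) M]
  rw [integral_sub ((integrable_cauchyProfile hη).const_mul _)
      ((integrable_log_mul_cauchyProfile hη).const_mul _),
    integral_const_mul, integral_const_mul, integral_const_mul, integral_cauchyProfile hη,
    integral_log_mul_cauchyProfile hη]
  have : η - 1 ≠ 0 := by linarith
  field_simp
  ring

theorem stmt_2 (η M : ℝ) (hη : 1 < η) (hM : 0 < M) :
    (∀ ρ : R2 → ℝ, Measurable ρ → (∀ x, 0 ≤ ρ x) → Integrable ρ →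
      (∫ x : R2, ρ x) = M →
      Integrable (fun x : R2 => ρ x * Real.log (ρ x)) →
      Integrable (fun x : R2 => Real.log (1 + ‖x‖ ^ 2) * ρ x) →
      (∫ x : R2, ρ x * Real.log (ρ x / M)) + η * (∫ x : R2, Real.log (1 + ‖x‖ ^ 2) * ρ x)
        ≥ M * Real.log ((η - 1) / π)) ∧
    ((∫ x : R2, (M * ((η - 1) / (π * (1 + ‖x‖ ^ 2) ^ η))) *
          Real.log (M * ((η - 1) / (π * (1 + ‖x‖ ^ 2) ^ η)) / M))
      + η * (∫ x : R2, Real.log (1 + ‖x‖ ^ 2) * (M * ((η - 1) / (π * (1 + ‖x‖ ^ 2) ^ η))))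
      = M * Real.log ((η - 1) / π)) := by
  refine ⟨fun ρ _ hρ hρi hmass hent hlog =>
    mul_log_le_freeEnergy hη hM hρ hρi hmass hent hlog, ?_⟩
  simp_rw [← cauchyProfile_eq]
  exact freeEnergy_const_mul_cauchyProfile hη M
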